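/- For every real number k and every complex number z with Im z > 0, Σ_{r=−2}^{2} P_k(z + r/5) = (5 + 5^{1−k}) · P_k(5z) − 5^{1−k} · P_k(25z). -/

import Mathlib

/-!
With `q = e^{2πiz}`, expanding `qⁿ/(1 - qⁿ)` geometrically gives
`P_k(z) = ∑_{n,m ≥ 1} n^{-k} q^{nm}`. Replacing `z` by `z + r/5` multiplies the `(n, m)` term by
`ζ^{rnm}` for a primitive fifth root of unity `ζ`, so summing over five consecutive `r` keeps the
terms with `5 ∣ nm`, each five times, and kills the others. As `5` is prime, `5 ∣ nm` iff `5 ∣ n`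
or `5 ∣ m`, and by inclusion–exclusion the terms with `5 ∣ n`, with `5 ∣ m` and with both
reassemble into `5^{-k} P_k(5z)`, `P_k(5z)` and `5^{-k} P_k(25z)`.
-/

noncomputable def P (k : ℝ) (z : ℂ) : ℂ :=
  ∑' n : ℕ+, (n : ℂ) ^ (-(k : ℂ)) *
    (Complex.exp (2 * Real.pi * Complex.I * n * z) /
      (1 - Complex.exp (2 * Real.pi * Complex.I * n * z)))

open Complex Finset

theorem IsPrimitiveRoot.sum_Ico_zpow_pow {K : Type*} [Field K] {ζ : K} {N : ℕ}
    (hζ : IsPrimitiveRoot ζ N) (a : ℤ) (c : ℕ) :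
    ∑ r ∈ Ico a (a + N), (ζ ^ r) ^ c = if N ∣ c then (N : K) else 0 := by
  rcases Nat.eq_zero_or_pos N with rfl | hN
  · simp
  simp_rw [← zpow_natCast, ← zpow_mul, mul_comm _ (c : ℤ), zpow_mul, zpow_natCast]
  split_ifs with hc
  · simp [(hζ.pow_eq_one_iff_dvd c).2 hc]
  · have hζ0 : ζ ^ c ≠ 0 := pow_ne_zero _ (hζ.ne_zero hN.ne')
    have hgeom : ∑ j ∈ range N, (ζ ^ c) ^ j = 0 := by
      rw [geom_sum_eq (mt (hζ.pow_eq_one_iff_dvd c).1 hc), ← pow_mul, mul_comm, pow_mul,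
        hζ.pow_eq_one, one_pow, sub_self, zero_div]
    rw [Int.Ico_eq_finset_map, sum_map, add_sub_cancel_left, Int.toNat_natCast]
    simp [zpow_add₀ hζ0, ← mul_sum, hgeom]

theorem tsum_indicator_dvd_prod_dvd {α β M : Type*} [Monoid α] [IsLeftCancelMul α]
    [Monoid β] [IsLeftCancelMul β] [AddCommMonoid M] [TopologicalSpace M]
    (f : α × β → M) (a : α) (b : β) :
    ∑' x, ({n | a ∣ n} ×ˢ {m | b ∣ m}).indicator f x =
      ∑' x : α × β, f (a * x.1, b * x.2) := by
  have hrange : {n | a ∣ n} ×ˢ {m | b ∣ m} = Set.range (Prod.map (a * ·) (b * ·)) := by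
    ext ⟨n, m⟩
    simp [Dvd.dvd, eq_comm]
  rw [hrange, ← _root_.tsum_subtype,
    tsum_range _ (Prod.map_injective.2 ⟨mul_right_injective a, mul_right_injective b⟩)]
  rfl

theorem Summable.tsum_indicator_union {β E : Type*} [NormedAddCommGroup E] [CompleteSpace E]
    {f : β → E} (hf : Summable f) (s t : Set β) :
    ∑' x, (s ∪ t).indicator f x =
      ∑' x, s.indicator f x + ∑' x, t.indicator f x - ∑' x, (s ∩ t).indicator f x := by
  rw [eq_sub_iff_add_eq, ← (hf.indicator _).tsum_add (hf.indicator _),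
    ← (hf.indicator _).tsum_add (hf.indicator _)]
  exact tsum_congr (Set.indicator_union_add_inter_apply f s t)

theorem tsum_pnat_pow_eq_div_one_sub {u : ℂ} (hu : ‖u‖ < 1) :
    ∑' m : ℕ+, u ^ (m : ℕ) = u / (1 - u) := by
  rw [tsum_pnat_eq_tsum_succ (f := (u ^ ·))]
  simp_rw [pow_succ']
  rw [tsum_mul_left, tsum_geometric_of_norm_lt_one hu, div_eq_mul_inv]

noncomputable def lambertTerm (s q : ℂ) (x : ℕ+ × ℕ+) : ℂ :=
  (x.1 : ℂ) ^ (-s) * q ^ (x.1 * x.2 : ℕ)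

noncomputable def lambertSeries (s q : ℂ) : ℂ :=
  ∑' x, lambertTerm s q x

theorem summable_lambertTerm (s : ℂ) {q : ℂ} (hq : ‖q‖ < 1) :
    Summable (lambertTerm s q) := by
  set K := ⌈-s.re⌉₊
  have hbound :
      Summable fun x : ℕ+ × ℕ+ ↦ ((x.1 : ℕ) : ℝ) ^ K * ‖q‖ ^ (x.1 * x.2 : ℕ) := by
    simpa [mul_comm] using (summable_prod_mul_pow K (r := ‖q‖) (by simpa using hq)).prod_symm
  refine Summable.of_norm_bounded hbound fun x ↦ ?_
  rw [lambertTerm, norm_mul, norm_pow, norm_natCast_cpow_of_pos x.1.pos]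
  gcongr
  rw [← Real.rpow_natCast]
  exact Real.rpow_le_rpow_of_exponent_le (Nat.one_le_cast.2 x.1.pos)
    (by simpa using Nat.le_ceil _)

theorem lambertTerm_mul_mul (s q : ℂ) (a b : ℕ+) (x : ℕ+ × ℕ+) :
    lambertTerm s q (a * x.1, b * x.2) =
      (a : ℂ) ^ (-s) * lambertTerm s (q ^ (a * b : ℕ)) x := by
  simp only [lambertTerm, PNat.mul_coe, Nat.cast_mul, natCast_mul_natCast_cpow, ← pow_mul]
  ring_nf

theorem lambertSeries_eq_tsum_div (s : ℂ) {q : ℂ} (hq : ‖q‖ < 1) :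
    lambertSeries s q =
      ∑' n : ℕ+, (n : ℂ) ^ (-s) * (q ^ (n : ℕ) / (1 - q ^ (n : ℕ))) := by
  rw [lambertSeries, (summable_lambertTerm s hq).tsum_prod]
  refine tsum_congr fun n ↦ ?_
  rw [← tsum_pnat_pow_eq_div_one_sub (by simpa using pow_lt_one₀ (norm_nonneg q) hq n.ne_zero),
    ← tsum_mul_left]
  simp [lambertTerm, pow_mul]

theorem sum_lambertTerm_zpow_mul {p : ℕ+} {ζ : ℂ} (hζ : IsPrimitiveRoot ζ p) (s q : ℂ)
    (a : ℤ) (x : ℕ+ × ℕ+) :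
    ∑ r ∈ Ico a (a + p), lambertTerm s (ζ ^ r * q) x =
      p * {y : ℕ+ × ℕ+ | p ∣ y.1 * y.2}.indicator (lambertTerm s q) x := by
  have hterm (r : ℤ) :
      lambertTerm s (ζ ^ r * q) x = (ζ ^ r) ^ (x.1 * x.2 : ℕ) * lambertTerm s q x := by
    simp only [lambertTerm, mul_pow]
    ring
  simp_rw [hterm, ← sum_mul, hζ.sum_Ico_zpow_pow]
  by_cases h : p ∣ x.1 * x.2 <;> simp [h, ← PNat.mul_coe, ← PNat.dvd_iff]

-- `{m | 1 ∣ m}` rather than `univ`, so that every piece has the shape handled by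
-- `tsum_indicator_dvd_prod_dvd`.
theorem setOf_prime_dvd_mul {p : ℕ+} (hp : (p : ℕ).Prime) :
    {x : ℕ+ × ℕ+ | p ∣ x.1 * x.2} =
      {n | p ∣ n} ×ˢ {m | 1 ∣ m} ∪ {n | 1 ∣ n} ×ˢ {m | p ∣ m} := by
  ext x
  simp [PNat.dvd_iff, hp.dvd_mul]

theorem sum_lambertSeries_zpow_mul {p : ℕ+} (hp : (p : ℕ).Prime) {ζ : ℂ}
    (hζ : IsPrimitiveRoot ζ p) (s : ℂ) {q : ℂ} (hq : ‖q‖ < 1) (a : ℤ) :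
    ∑ r ∈ Ico a (a + p), lambertSeries s (ζ ^ r * q) =
      (p + (p : ℂ) ^ (1 - s)) * lambertSeries s (q ^ (p : ℕ))
        - (p : ℂ) ^ (1 - s) * lambertSeries s (q ^ ((p : ℕ) ^ 2)) := by
  have hζq (r : ℤ) : ‖ζ ^ r * q‖ < 1 := by
    simpa [norm_zpow, hζ.norm'_eq_one p.ne_zero] using hq
  have hinter : ({n | p ∣ n} ×ˢ {m | 1 ∣ m} ∩ {n | 1 ∣ n} ×ˢ {m | p ∣ m} : Set (ℕ+ × ℕ+)) =
      {n | p ∣ n} ×ˢ {m | p ∣ m} := by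
    simp [Set.prod_inter_prod]
  calc ∑ r ∈ Ico a (a + p), lambertSeries s (ζ ^ r * q)
      = p * ∑' x, {y : ℕ+ × ℕ+ | p ∣ y.1 * y.2}.indicator (lambertTerm s q) x := by
        simp_rw [lambertSeries,
          ← Summable.tsum_finsetSum fun r _ ↦ summable_lambertTerm s (hζq r),
          sum_lambertTerm_zpow_mul hζ, tsum_mul_left]
    _ = p * ((p : ℂ) ^ (-s) * lambertSeries s (q ^ (p : ℕ)) + lambertSeries s (q ^ (p : ℕ))
          - (p : ℂ) ^ (-s) * lambertSeries s (q ^ ((p : ℕ) ^ 2))) := by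
        rw [setOf_prime_dvd_mul hp, (summable_lambertTerm s hq).tsum_indicator_union, hinter]
        simp_rw [tsum_indicator_dvd_prod_dvd, lambertTerm_mul_mul, tsum_mul_left, lambertSeries]
        simp [sq]
    _ = _ := by
        rw [sub_eq_add_neg (1 : ℂ), cpow_add _ _ (by simp), cpow_one]
        ring

theorem P_eq_lambertSeries (k : ℝ) {w : ℂ} (hw : 0 < w.im) :
    P k w = lambertSeries k (cexp (2 * Real.pi * I * w)) := by
  rw [lambertSeries_eq_tsum_div _ (UpperHalfPlane.norm_exp_two_pi_I_lt_one ⟨w, hw⟩), P]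
  congr! 4 with n <;> rw [← exp_nat_mul] <;> ring_nf

theorem quintupling (k : ℝ) (z : ℂ) (hz : 0 < z.im) :
    ∑ r ∈ Finset.Icc (-2 : ℤ) 2, P k (z + (r : ℂ) / 5) =
      (5 + (((5 : ℝ) ^ (1 - k) : ℝ) : ℂ)) * P k (5 * z)
        - (((5 : ℝ) ^ (1 - k) : ℝ) : ℂ) * P k (25 * z) := by
  set q := cexp (2 * Real.pi * I * z)
  set ζ := cexp (2 * Real.pi * I / 5)
  have hq : ‖q‖ < 1 := UpperHalfPlane.norm_exp_two_pi_I_lt_one ⟨z, hz⟩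
  have hζ : IsPrimitiveRoot ζ (5 : ℕ+) := by simpa using isPrimitiveRoot_exp 5 (by norm_num)
  have hshift (r : ℤ) : cexp (2 * Real.pi * I * (z + r / 5)) = ζ ^ r * q := by
    rw [← exp_int_mul, ← exp_add]
    ring_nf
  have hscale (n : ℕ) : cexp (2 * Real.pi * I * (n * z)) = q ^ n := by
    rw [← exp_nat_mul]
    ring_nf
  calc ∑ r ∈ Icc (-2 : ℤ) 2, P k (z + (r : ℂ) / 5)
      = ∑ r ∈ Ico (-2 : ℤ) (-2 + ((5 : ℕ+) : ℕ)), lambertSeries k (ζ ^ r * q) :=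
        sum_congr (by decide) fun r _ ↦ by rw [P_eq_lambertSeries k (by simpa using hz), hshift]
    _ = (5 + (((5 : ℝ) ^ (1 - k) : ℝ) : ℂ)) * lambertSeries k (q ^ 5)
          - (((5 : ℝ) ^ (1 - k) : ℝ) : ℂ) * lambertSeries k (q ^ 25) := by
        simpa [ofReal_cpow] using sum_lambertSeries_zpow_mul (by norm_num) hζ k hq (-2)
    _ = _ := by
        rw [P_eq_lambertSeries k (by simpa using hz), P_eq_lambertSeries k (by simpa using hz),
          ← hscale 5, ← hscale 25]
        norm_num
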